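/- Let Q : Matrix S S ℝ have nonnegative entries with every row sum at most 1, and suppose that from every state s there is a state t reachable from s (in the reflexive-transitive closure of the relation 'Q s s' > 0') whose row sum is strictly less than 1, i.e. ∑_{u} Q t u < 1. Then for every vector c : S → ℝ the linear system x = Q.mulVec x + c has exactly one solution x : S → ℝ. (This is the unique-solvability fact guaranteeing that the constrained-reachability and bias systems solved in Lines 8 and 11 of Algorithm 3 are square with a unique solution.) -/
import Mathlib


open Matrix Finset

/-- `s` reaches `s'` if `(s, s')` is in the reflexive-transitive closure of the relation
"leads to", i.e. `Q s s' > 0`. -/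
def Reaches {S : Type*} (Q : Matrix S S ℝ) : S → S → Prop :=
  Relation.ReflTransGen fun s s' => 0 < Q s s'

/-- If `Q` is substochastic and from every state one can reach a state whose row sum is
strictly below 1, then for every `c` the system `x = Q x + c` has exactly one solution. -/
theorem substochastic_unique_solution {S : Type*} [Fintype S] [Nonempty S]
    (Q : Matrix S S ℝ)
    (hnn : ∀ s s', 0 ≤ Q s s')
    (hsub : ∀ s, ∑ s', Q s s' ≤ 1)
    (hleak : ∀ s, ∃ t, Reaches Q s t ∧ ∑ u, Q t u < 1)
    (c : S → ℝ) :
    ∃! x : S → ℝ, x = Q.mulVec x + c := by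
  classical
  -- kernel of (1 - Q) is trivial
  have hker : ∀ x : S → ℝ, x = Q.mulVec x → x = 0 := by
    intro x hx
    by_contra hx0
    obtain ⟨s₀, -, hs₀⟩ := Finset.exists_max_image Finset.univ (fun s => |x s|)
      ⟨Classical.arbitrary S, Finset.mem_univ _⟩
    set M := |x s₀| with hM
    have hle : ∀ s, |x s| ≤ M := fun s => hs₀ s (Finset.mem_univ s)
    have hMpos : 0 < M := by
      rcases lt_or_ge 0 M with h | h
      · exact h
      · exact absurd (funext fun s => abs_eq_zero.mp
          (le_antisymm ((hle s).trans h) (abs_nonneg _)) : x = 0) hx0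
    have hbound : ∀ s, |x s| ≤ ∑ u, Q s u * |x u| := by
      intro s
      have : x s = ∑ u, Q s u * x u := by
        conv_lhs => rw [hx]
        rfl
      rw [this]
      calc |∑ u, Q s u * x u| ≤ ∑ u, |Q s u * x u| := Finset.abs_sum_le_sum_abs _ _
        _ = ∑ u, Q s u * |x u| := by
            refine Finset.sum_congr rfl fun u _ => ?_
            rw [abs_mul, abs_of_nonneg (hnn s u)]
    -- propagation of the maximum
    have hprop : ∀ s s', |x s| = M → 0 < Q s s' → |x s'| = M := by
      intro s s' hsM hQ
      by_contra hne
      have hlt : |x s'| < M := lt_of_le_of_ne (hle s') hne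
      have h1 : ∑ u, Q s u * |x u| < ∑ u, Q s u * M := by
        refine Finset.sum_lt_sum (fun u _ => ?_) ⟨s', Finset.mem_univ s', ?_⟩
        · exact mul_le_mul_of_nonneg_left (hle u) (hnn s u)
        · exact mul_lt_mul_of_pos_left hlt hQ
      have h2 : ∑ u, Q s u * M ≤ M := by
        rw [← Finset.sum_mul]
        calc (∑ u, Q s u) * M ≤ 1 * M :=
              mul_le_mul_of_nonneg_right (hsub s) hMpos.le
          _ = M := one_mul M
      exact absurd (hbound s) (by rw [hsM]; exact not_le.mpr (lt_of_lt_of_le h1 h2))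
    obtain ⟨t, hreach, hrow⟩ := hleak s₀
    have htM : |x t| = M := by
      clear hrow
      induction hreach with
      | refl => rfl
      | tail _ hbc ih => exact hprop _ _ ih hbc
    have : |x t| < M := by
      calc |x t| ≤ ∑ u, Q t u * |x u| := hbound t
        _ ≤ ∑ u, Q t u * M := by
            refine Finset.sum_le_sum fun u _ => mul_le_mul_of_nonneg_left (hle u) (hnn t u)
        _ = (∑ u, Q t u) * M := by rw [Finset.sum_mul]
        _ < 1 * M := mul_lt_mul_of_pos_right hrow hMpos
        _ = M := one_mul M
    exact absurd htM this.ne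
  -- the linear map given by (1 - Q) is injective, hence bijective
  set A : Matrix S S ℝ := 1 - Q with hA
  have hequiv : ∀ x : S → ℝ, (x = Q.mulVec x + c) ↔ A.mulVec x = c := by
    intro x
    rw [hA, sub_mulVec, one_mulVec]
    constructor
    · intro h; nth_rewrite 1 [h]; abel
    · intro h; rw [← h]; abel
  have hinj : Function.Injective (Matrix.toLin' A) := by
    rw [← LinearMap.ker_eq_bot, LinearMap.ker_eq_bot']
    intro x hxm
    have : A.mulVec x = 0 := by simpa [Matrix.toLin'_apply] using hxm
    apply hker
    have := sub_eq_zero.mp (by rw [hA, sub_mulVec, one_mulVec] at this; exact this)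
    exact this
  have hsurj : Function.Surjective (Matrix.toLin' A) :=
    (LinearMap.injective_iff_surjective).mp hinj
  obtain ⟨x, hxc⟩ := hsurj c
  have hx' : x = Q.mulVec x + c := (hequiv x).mpr (by simpa [Matrix.toLin'_apply] using hxc)
  refine ⟨x, hx', fun y hy => hinj ?_⟩
  show Matrix.toLin' A y = Matrix.toLin' A x
  simp only [Matrix.toLin'_apply]
  rw [(hequiv y).mp hy, (hequiv x).mp hx']
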